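/- Let ξ be a Poisson random variable with parameter λ > 0. Then for all p ∈ [1,2], E|ξ − λ|^p ≤ 2^{2−p} λ. -/

import Mathlib

open MeasureTheory ProbabilityTheory Real NNReal ENNReal

section PoissonAux

variable (l : ℝ≥0)

lemma poissonAux_pm_succ (n : ℕ) :
    ((n : ℝ) + 1) * poissonPMFReal l (n + 1) = (l : ℝ) * poissonPMFReal l n := by
  have hfac : ((n + 1).factorial : ℝ) = ((n : ℝ) + 1) * (n.factorial : ℝ) := by
    rw [Nat.factorial_succ]; push_cast; ring
  have hfacne : (n.factorial : ℝ) ≠ 0 := by positivity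
  have hn1 : ((n : ℝ) + 1) ≠ 0 := by positivity
  simp only [poissonPMFReal, hfac]
  field_simp
  ring

lemma poissonAux_hasSum_one : HasSum (fun n : ℕ ↦ poissonPMFReal l n) 1 :=
  poissonPMFRealSum l

lemma poissonAux_hasSum_mean :
    HasSum (fun n : ℕ ↦ (n : ℝ) * poissonPMFReal l n) (l : ℝ) := by
  have h1 : HasSum (fun n : ℕ ↦ ((n + 1 : ℕ) : ℝ) * poissonPMFReal l (n + 1)) (l : ℝ) := by
    have h := (poissonAux_hasSum_one l).mul_left (l : ℝ)
    rw [mul_one] at h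
    have heq : (fun n : ℕ ↦ (l : ℝ) * poissonPMFReal l n)
        = fun n : ℕ ↦ ((n + 1 : ℕ) : ℝ) * poissonPMFReal l (n + 1) := by
      funext n
      push_cast
      rw [poissonAux_pm_succ]
    rwa [heq] at h
  have := (hasSum_nat_add_iff (f := fun n : ℕ ↦ (n : ℝ) * poissonPMFReal l n) 1).mp h1
  simpa using this

lemma poissonAux_hasSum_fact2 :
    HasSum (fun n : ℕ ↦ (n : ℝ) * ((n : ℝ) - 1) * poissonPMFReal l n) ((l : ℝ) ^ 2) := by
  have h1 : HasSum (fun n : ℕ ↦ ((n + 2 : ℕ) : ℝ) * (((n + 2 : ℕ) : ℝ) - 1)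
      * poissonPMFReal l (n + 2)) ((l : ℝ) ^ 2) := by
    have h := (poissonAux_hasSum_one l).mul_left ((l : ℝ) ^ 2)
    rw [mul_one] at h
    have heq : (fun n : ℕ ↦ (l : ℝ) ^ 2 * poissonPMFReal l n)
        = fun n : ℕ ↦ ((n + 2 : ℕ) : ℝ) * (((n + 2 : ℕ) : ℝ) - 1)
          * poissonPMFReal l (n + 2) := by
      funext n
      have h2 : ((n : ℝ) + 1 + 1) * poissonPMFReal l (n + 1 + 1)
          = (l : ℝ) * poissonPMFReal l (n + 1) := by
        have := poissonAux_pm_succ l (n + 1)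
        push_cast at this ⊢
        linarith [this]
      have h3 := poissonAux_pm_succ l n
      push_cast
      have hrw : ((n : ℝ) + 2) * ((n : ℝ) + 2 - 1) * poissonPMFReal l (n + 2)
          = ((n : ℝ) + 1) * (((n : ℝ) + 1 + 1) * poissonPMFReal l (n + 1 + 1)) := by
        ring_nf
      rw [hrw, h2, ← mul_assoc, mul_comm ((n : ℝ) + 1) (l : ℝ), mul_assoc, h3]
      ring
    rwa [heq] at h
  have := (hasSum_nat_add_iff
    (f := fun n : ℕ ↦ (n : ℝ) * ((n : ℝ) - 1) * poissonPMFReal l n) 2).mp h1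
  simpa [Finset.sum_range_succ] using this

lemma poissonAux_hasSum_var :
    HasSum (fun n : ℕ ↦ ((n : ℝ) - (l : ℝ)) ^ 2 * poissonPMFReal l n) (l : ℝ) := by
  have h := ((poissonAux_hasSum_fact2 l).add
    ((poissonAux_hasSum_mean l).mul_left (1 - 2 * (l : ℝ)))).add
    ((poissonAux_hasSum_one l).mul_left ((l : ℝ) ^ 2))
  have heq : (fun n : ℕ ↦ ((n : ℝ) * ((n : ℝ) - 1) * poissonPMFReal l n
      + (1 - 2 * (l : ℝ)) * ((n : ℝ) * poissonPMFReal l n))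
      + (l : ℝ) ^ 2 * poissonPMFReal l n)
      = fun n : ℕ ↦ ((n : ℝ) - (l : ℝ)) ^ 2 * poissonPMFReal l n := by
    funext n; ring
  have hval : (l : ℝ) ^ 2 + (1 - 2 * (l : ℝ)) * (l : ℝ) + (l : ℝ) ^ 2 * 1 = (l : ℝ) := by ring
  rw [heq, hval] at h
  exact h

/-- lintegral against the Poisson measure computed from a real `HasSum` of the weighted pmf. -/
lemma poissonAux_lintegral (g : ℕ → ℝ) (hg : ∀ n, 0 ≤ g n) (c : ℝ)
    (h : HasSum (fun n : ℕ ↦ g n * poissonPMFReal l n) c) :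
    ∫⁻ n, ENNReal.ofReal (g n) ∂(poissonMeasure l) = ENNReal.ofReal c := by
  rw [lintegral_countable']
  have hμ : ∀ n : ℕ, (poissonMeasure l) {n} = ENNReal.ofReal (poissonPMFReal l n) := fun n ↦
    by rw [poissonMeasure_singleton, poissonPMFReal]
  calc ∑' n : ℕ, ENNReal.ofReal (g n) * poissonMeasure l {n}
      = ∑' n : ℕ, ENNReal.ofReal (g n * poissonPMFReal l n) := by
        refine tsum_congr fun n ↦ ?_
        rw [hμ, ← ENNReal.ofReal_mul (hg n)]
    _ = ENNReal.ofReal c := by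
        rw [← ENNReal.ofReal_tsum_of_nonneg
          (fun n ↦ mul_nonneg (hg n) poissonPMFReal_nonneg) h.summable, h.tsum_eq]

lemma poissonAux_abs_le :
    ∫⁻ n, ENNReal.ofReal |(n : ℝ) - (l : ℝ)| ∂(poissonMeasure l)
      ≤ ENNReal.ofReal (2 * (l : ℝ)) := by
  have hmono : ∫⁻ n, ENNReal.ofReal |(n : ℝ) - (l : ℝ)| ∂(poissonMeasure l)
      ≤ ∫⁻ n, ENNReal.ofReal ((n : ℝ) + (l : ℝ)) ∂(poissonMeasure l) := by
    refine lintegral_mono fun n ↦ ENNReal.ofReal_le_ofReal ?_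
    have h1 : (0 : ℝ) ≤ (n : ℝ) := Nat.cast_nonneg n
    have h2 : (0 : ℝ) ≤ (l : ℝ) := l.coe_nonneg
    rw [abs_le]
    constructor <;> linarith
  have hsum : HasSum (fun n : ℕ ↦ ((n : ℝ) + (l : ℝ)) * poissonPMFReal l n)
      (2 * (l : ℝ)) := by
    have h := (poissonAux_hasSum_mean l).add ((poissonAux_hasSum_one l).mul_left (l : ℝ))
    rw [mul_one] at h
    have heq : (fun n : ℕ ↦ (n : ℝ) * poissonPMFReal l n + (l : ℝ) * poissonPMFReal l n)
        = fun n : ℕ ↦ ((n : ℝ) + (l : ℝ)) * poissonPMFReal l n := by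
      funext n; ring
    rw [heq, show (l : ℝ) + (l : ℝ) = 2 * (l : ℝ) by ring] at h
    exact h
  have heval := poissonAux_lintegral l (fun n ↦ (n : ℝ) + (l : ℝ))
    (fun n ↦ by positivity) _ hsum
  rw [heval] at hmono
  exact hmono

lemma poissonAux_sq :
    ∫⁻ n, ENNReal.ofReal (((n : ℝ) - (l : ℝ)) ^ 2) ∂(poissonMeasure l)
      = ENNReal.ofReal (l : ℝ) :=
  poissonAux_lintegral l _ (fun n ↦ sq_nonneg _) _ (poissonAux_hasSum_var l)

lemma poissonAux_key (hl : 0 < l) (p : ℝ) (hp : p ∈ Set.Icc (1 : ℝ) 2) :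
    ∫⁻ n, ENNReal.ofReal (|(n : ℝ) - (l : ℝ)| ^ p) ∂(poissonMeasure l)
      ≤ ENNReal.ofReal (2 ^ (2 - p) * (l : ℝ)) := by
  obtain ⟨hp1, hp2⟩ := hp
  rcases eq_or_lt_of_le hp2 with hp2' | hp2'
  · -- p = 2
    subst hp2'
    have hpt : ∀ n : ℕ, |(n : ℝ) - (l : ℝ)| ^ (2 : ℝ) = ((n : ℝ) - (l : ℝ)) ^ 2 := by
      intro n
      rw [show (2 : ℝ) = ((2 : ℕ) : ℝ) by norm_num, Real.rpow_natCast, sq_abs]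
    calc ∫⁻ n, ENNReal.ofReal (|(n : ℝ) - (l : ℝ)| ^ (2 : ℝ)) ∂(poissonMeasure l)
        = ∫⁻ n, ENNReal.ofReal (((n : ℝ) - (l : ℝ)) ^ 2) ∂(poissonMeasure l) := by
          simp_rw [hpt]
      _ = ENNReal.ofReal (l : ℝ) := poissonAux_sq l
      _ ≤ ENNReal.ofReal (2 ^ (2 - (2 : ℝ)) * (l : ℝ)) := by
          rw [sub_self, Real.rpow_zero, one_mul]
  rcases eq_or_lt_of_le hp1 with hp1' | hp1'
  · -- p = 1
    subst hp1'
    have h : ∫⁻ n, ENNReal.ofReal (|(n : ℝ) - (l : ℝ)| ^ (1 : ℝ)) ∂(poissonMeasure l)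
        ≤ ENNReal.ofReal (2 * (l : ℝ)) := by
      simp_rw [Real.rpow_one]
      exact poissonAux_abs_le l
    refine h.trans_eq ?_
    norm_num
  -- 1 < p < 2
  set μ := poissonMeasure l
  set f : ℕ → ℝ≥0∞ := fun n ↦ ENNReal.ofReal |(n : ℝ) - (l : ℝ)| with hf
  have h2p : (0 : ℝ) < 2 - p := by linarith
  have hp1'' : (0 : ℝ) < p - 1 := by linarith
  have hpq : Real.HolderConjugate (1 / (2 - p)) (1 / (p - 1)) := by
    constructor
    · rw [one_div, one_div, inv_inv, inv_inv, inv_one]; ring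
    · positivity
    · positivity
  have hpt : (fun n : ℕ ↦ ENNReal.ofReal (|(n : ℝ) - (l : ℝ)| ^ p))
      = fun n : ℕ ↦ (f n ^ (2 - p)) * (f n ^ (2 * (p - 1))) := by
    funext n
    have hadd := ENNReal.rpow_add_of_nonneg (x := ENNReal.ofReal |(n : ℝ) - (l : ℝ)|)
      (2 - p) (2 * (p - 1)) (le_of_lt h2p) (by linarith)
    rw [show (2 - p) + 2 * (p - 1) = p by ring] at hadd
    rw [hf, ← ENNReal.ofReal_rpow_of_nonneg (abs_nonneg _) (by linarith : (0:ℝ) ≤ p), hadd]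
  have hmf : AEMeasurable (fun n : ℕ ↦ f n ^ (2 - p)) μ := (Measurable.of_discrete).aemeasurable
  have hmg : AEMeasurable (fun n : ℕ ↦ f n ^ (2 * (p - 1))) μ :=
    (Measurable.of_discrete).aemeasurable
  have holder := ENNReal.lintegral_mul_le_Lp_mul_Lq μ hpq hmf hmg
  rw [hpt]
  have h2pne : (2 - p) ≠ 0 := ne_of_gt h2p
  have hp1ne : (p - 1) ≠ 0 := ne_of_gt hp1''
  have hA : (fun n : ℕ ↦ (f n ^ (2 - p)) ^ (1 / (2 - p))) = f := by
    funext n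
    rw [← ENNReal.rpow_mul, mul_one_div, div_self h2pne, ENNReal.rpow_one]
  have hB : (fun n : ℕ ↦ (f n ^ (2 * (p - 1))) ^ (1 / (p - 1)))
      = fun n : ℕ ↦ ENNReal.ofReal (((n : ℝ) - (l : ℝ)) ^ 2) := by
    funext n
    rw [← ENNReal.rpow_mul]
    have h22 : 2 * (p - 1) * (1 / (p - 1)) = ((2 : ℕ) : ℝ) := by
      field_simp; norm_num
    rw [h22, ENNReal.rpow_natCast, hf, ← ENNReal.ofReal_pow (abs_nonneg _), sq_abs]
  rw [hA, hB] at holder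
  have h1div : 1 / (1 / (2 - p)) = 2 - p := one_div_one_div _
  have h1div' : 1 / (1 / (p - 1)) = p - 1 := one_div_one_div _
  rw [h1div, h1div', poissonAux_sq l] at holder
  refine holder.trans ?_
  have hstep : (∫⁻ n, f n ∂μ) ^ (2 - p) * ENNReal.ofReal (l : ℝ) ^ (p - 1)
      ≤ (ENNReal.ofReal (2 * (l : ℝ))) ^ (2 - p) * ENNReal.ofReal (l : ℝ) ^ (p - 1) := by
    gcongr
    exact poissonAux_abs_le l
  refine hstep.trans ?_
  rw [ENNReal.ofReal_rpow_of_nonneg (by positivity) (le_of_lt h2p),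
    ENNReal.ofReal_rpow_of_nonneg l.coe_nonneg (le_of_lt hp1''),
    ← ENNReal.ofReal_mul (by positivity)]
  refine ENNReal.ofReal_le_ofReal (le_of_eq ?_)
  rw [Real.mul_rpow (by norm_num) l.coe_nonneg, mul_assoc,
    ← Real.rpow_add (by exact_mod_cast hl)]
  norm_num

end PoissonAux

/-- If `ξ` is a Poisson random variable with parameter `λ > 0`, then for all `p ∈ [1,2]`,
`E|ξ − λ|^p ≤ 2^{2−p} λ`. -/
theorem poisson_centered_moment_bound
    {Ω : Type*} [MeasurableSpace Ω] (P : Measure Ω) [IsProbabilityMeasure P]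
    (l : ℝ≥0) (hl : 0 < l) (ξ : Ω → ℕ) (hξ : Measurable ξ)
    (hlaw : Measure.map ξ P = poissonMeasure l)
    (p : ℝ) (hp : p ∈ Set.Icc (1 : ℝ) 2) :
    ∫ ω, |(ξ ω : ℝ) - (l : ℝ)| ^ p ∂P ≤ 2 ^ (2 - p) * (l : ℝ) := by
  have hg : Measurable (fun n : ℕ ↦ |(n : ℝ) - (l : ℝ)| ^ p) := Measurable.of_discrete
  have hmeas : Measurable (fun ω ↦ |(ξ ω : ℝ) - (l : ℝ)| ^ p) := hg.comp hξ
  rw [integral_eq_lintegral_of_nonneg_ae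
    (Filter.Eventually.of_forall fun ω ↦ Real.rpow_nonneg (abs_nonneg _) p)
    hmeas.aestronglyMeasurable]
  have hmap : ∫⁻ ω, ENNReal.ofReal (|(ξ ω : ℝ) - (l : ℝ)| ^ p) ∂P
      = ∫⁻ n, ENNReal.ofReal (|(n : ℝ) - (l : ℝ)| ^ p) ∂(Measure.map ξ P) := by
    rw [lintegral_map (Measurable.of_discrete) hξ]
  rw [hmap, hlaw]
  exact ENNReal.toReal_le_of_le_ofReal (by positivity) (poissonAux_key l hl p hp)
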